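/- arXiv:2003.13320 — 2 statements merged into one kernel-verified Lean document; each statement's English description precedes it below -/
import Mathlib

section
/- Let N = 2^n and F_N = F_2^{⊗n} where F_2 is the 2×2 lower-triangular matrix [[1,0],[1,1]] over GF(2). For every index i with N/2 + 1 ≤ i ≤ N and every binary vector u = (0,...,0, u_i,...,u_N) whose first i−1 coordinates are zero, the codeword c = u F_N, split into its first half c_1 and second half c_2, satisfies c_1 = c_2. In particular the Hamming weight of c is split equally between the two halves. -/
open Finset Matrix

/-- The Arıkan kernel F₂ = [[1,0],[1,1]] over GF(2). -/
def F2 : Matrix (Fin 2) (Fin 2) (ZMod 2) := !![1, 0; 1, 1]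

/-- The polar transform F_N = F₂^{⊗n} over GF(2), defined recursively as the
    Kronecker product F₂ ⊗ F_{2^n} (entrywise form of the Kronecker power). -/
def FN : (n : ℕ) → Matrix (Fin (2 ^ n)) (Fin (2 ^ n)) (ZMod 2)
  | 0 => 1
  | n + 1 => fun i j =>
      F2 ⟨i.val / 2 ^ n, by
            have hi := i.isLt
            have h : (2 : ℕ) ^ (n + 1) = 2 ^ n * 2 := pow_succ 2 n
            exact (Nat.div_lt_iff_lt_mul (Nat.two_pow_pos n)).mpr (by omega)⟩
         ⟨j.val / 2 ^ n, by
            have hj := j.isLt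
            have h : (2 : ℕ) ^ (n + 1) = 2 ^ n * 2 := pow_succ 2 n
            exact (Nat.div_lt_iff_lt_mul (Nat.two_pow_pos n)).mpr (by omega)⟩
      * FN n ⟨i.val % 2 ^ n, Nat.mod_lt _ (Nat.two_pow_pos n)⟩
             ⟨j.val % 2 ^ n, Nat.mod_lt _ (Nat.two_pow_pos n)⟩

lemma FN_entry_shift (m : ℕ) (k : Fin (2 ^ (m + 1))) (hk : 2 ^ m ≤ k.val)
    (j j' : Fin (2 ^ (m + 1))) (hj : j.val < 2 ^ m) (hj' : j'.val = j.val + 2 ^ m) :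
    FN (m + 1) k j = FN (m + 1) k j' := by
  have hpow : (2 : ℕ) ^ (m + 1) = 2 ^ m * 2 := pow_succ 2 m
  have hk2 : k.val / 2 ^ m = 1 :=
    Nat.div_eq_of_lt_le (by omega) (by have := k.isLt; omega)
  have hjd : j.val / 2 ^ m = 0 := Nat.div_eq_of_lt hj
  have hj'd : j'.val / 2 ^ m = 1 :=
    Nat.div_eq_of_lt_le (by omega) (by have := j'.isLt; omega)
  have hjm : j.val % 2 ^ m = j.val := Nat.mod_eq_of_lt hj
  have hj'm : j'.val % 2 ^ m = j.val := by rw [hj', Nat.add_mod_right, hjm]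
  simp only [FN, hk2, hjd, hj'd, hjm, hj'm]
  congr 1

/-- Lemma 3: for N = 2^n and any 1-indexed row index i with N/2 + 1 ≤ i ≤ N, every
    codeword c = u F_N with u_1 = ⋯ = u_{i-1} = 0 consists of two identical halves;
    in particular its Hamming weight splits equally between the two halves. -/
theorem polar_subcode_equal_halves (n : ℕ) (hn : 1 ≤ n) (i : ℕ)
    (hi1 : 2 ^ (n - 1) + 1 ≤ i) (hi2 : i ≤ 2 ^ n)
    (u : Fin (2 ^ n) → ZMod 2) (hu : ∀ k : Fin (2 ^ n), k.val + 1 < i → u k = 0) :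
    (∀ j : Fin (2 ^ n), (hj : j.val < 2 ^ (n - 1)) →
      Matrix.vecMul u (FN n) j =
        Matrix.vecMul u (FN n) ⟨j.val + 2 ^ (n - 1), by
          have h1 : n - 1 + 1 = n := by omega
          have h2 := pow_succ 2 (n - 1)
          rw [h1] at h2
          omega⟩) ∧
    (Finset.univ.filter (fun j : Fin (2 ^ n) =>
        j.val < 2 ^ (n - 1) ∧ Matrix.vecMul u (FN n) j ≠ 0)).card =
      (Finset.univ.filter (fun j : Fin (2 ^ n) =>
        2 ^ (n - 1) ≤ j.val ∧ Matrix.vecMul u (FN n) j ≠ 0)).card := by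
  obtain ⟨m, rfl⟩ : ∃ m, n = m + 1 := ⟨n - 1, by omega⟩
  simp only [Nat.add_sub_cancel] at *
  have hpow : (2 : ℕ) ^ (m + 1) = 2 ^ m * 2 := pow_succ 2 m
  have key : ∀ j j' : Fin (2 ^ (m + 1)), j.val < 2 ^ m → j'.val = j.val + 2 ^ m →
      Matrix.vecMul u (FN (m + 1)) j = Matrix.vecMul u (FN (m + 1)) j' := by
    intro j j' hj hj'
    simp only [Matrix.vecMul, dotProduct]
    refine Finset.sum_congr rfl fun k _ => ?_
    by_cases hk : 2 ^ m ≤ k.val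
    · rw [FN_entry_shift m k hk j j' hj hj']
    · rw [hu k (by omega)]; ring
  constructor
  · intro j hj
    exact key j _ hj rfl
  · refine Finset.card_bij' (fun j hj => ⟨j.val + 2 ^ m, ?_⟩)
      (fun j hj => ⟨j.val - 2 ^ m, ?_⟩) ?_ ?_ ?_ ?_
    · simp only [Finset.mem_filter] at hj; omega
    · have := j.isLt; omega
    · intro j hj
      simp only [Finset.mem_filter, Finset.mem_univ, true_and] at hj ⊢
      exact ⟨by omega, by rw [← key j _ hj.1 rfl]; exact hj.2⟩
    · intro j hj
      simp only [Finset.mem_filter, Finset.mem_univ, true_and] at hj ⊢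
      have hlt : j.val - 2 ^ m < 2 ^ m := by have := j.isLt; omega
      refine ⟨hlt, ?_⟩
      rw [key ⟨j.val - 2 ^ m, by omega⟩ j hlt (by simp; omega)]
      exact hj.2
    · intro j hj; simp only [Finset.mem_filter] at hj; ext; simp
    · intro j hj; simp only [Finset.mem_filter] at hj; ext; simp; omega
end

section
/- Let N = 2^n and F_N = F_2^{⊗n} over GF(2) with F_2 = [[1,0],[1,1]]. For N/2 + 1 ≤ i ≤ N, the linear code generated by rows i through N of F_N and the linear code generated by rows N + 2 − i through N of F_N are dual codes of each other (as subspaces of GF(2)^N with the standard bilinear form). -/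
/-!
Since F_{2N} = F₂ ⊗ F_N, the Gram matrix F_{2N} F_{2N}ᵀ is (F₂ F₂ᵀ) ⊗ (F_N F_Nᵀ) up to
reindexing, and F₂ F₂ᵀ = [[1,1],[1,0]] over GF(2). By induction, rows k and l of F_N
(0-indexed) are orthogonal as soon as k + l ≥ N, so the two codes are orthogonal. As F_N is
invertible, their dimensions N + 1 - i and i - 1 add up to N, so each is the whole dual of
the other.
-/

open Finset Matrix

/-- The linear code generated by rows a, a+1, ..., N of F_N (1-indexed a). -/
def rowSpan (n a : ℕ) : Submodule (ZMod 2) (Fin (2 ^ n) → ZMod 2) :=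
  Submodule.span (ZMod 2) {r | ∃ k : Fin (2 ^ n), a ≤ k.val + 1 ∧ r = FN n k}

/-- The dual code of a code C ⊆ GF(2)^N under the standard bilinear form. -/
def dualCode (n : ℕ) (C : Set (Fin (2 ^ n) → ZMod 2)) : Set (Fin (2 ^ n) → ZMod 2) :=
  {v | ∀ c ∈ C, ∑ j, v j * c j = 0}

open Module
open scoped Kronecker

def splitIndex (n : ℕ) : Fin 2 × Fin (2 ^ n) ≃ Fin (2 ^ (n + 1)) :=
  finProdFinEquiv.trans (finCongr (pow_succ' 2 n).symm)

lemma splitIndex_apply_val (n : ℕ) (a : Fin 2) (b : Fin (2 ^ n)) :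
    (splitIndex n (a, b) : ℕ) = b + 2 ^ n * a := rfl

lemma FN_succ (n : ℕ) :
    FN (n + 1) = (F2 ⊗ₖ FN n).submatrix (splitIndex n).symm (splitIndex n).symm := by
  ext i j
  rfl

lemma det_FN (n : ℕ) : (FN n).det = 1 := by
  induction n with
  | zero => exact det_one
  | succ n ih =>
    rw [FN_succ, det_submatrix_equiv_self, det_kronecker, ih]
    simp [F2, det_fin_two]

lemma F2_mul_transpose_one_one : (F2 * F2ᵀ) 1 1 = 0 := by decide

lemma FN_mul_transpose_apply_eq_zero (n : ℕ) (k l : Fin (2 ^ n)) (h : 2 ^ n ≤ k.val + l.val) :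
    (FN n * (FN n)ᵀ) k l = 0 := by
  induction n with
  | zero => omega
  | succ n ih =>
    have hgram : FN (n + 1) * (FN (n + 1))ᵀ =
        ((F2 * F2ᵀ) ⊗ₖ (FN n * (FN n)ᵀ)).submatrix (splitIndex n).symm (splitIndex n).symm := by
      rw [FN_succ, transpose_submatrix, submatrix_mul_equiv, ← kroneckerMap_transpose,
        ← mul_kronecker_mul]
    obtain ⟨⟨a, b⟩, rfl⟩ := (splitIndex n).surjective k
    obtain ⟨⟨a', b'⟩, rfl⟩ := (splitIndex n).surjective l
    rw [hgram, submatrix_apply, Equiv.symm_apply_apply, Equiv.symm_apply_apply, kronecker_apply]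
    rw [splitIndex_apply_val, splitIndex_apply_val, pow_succ] at h
    by_cases hone : a = 1 ∧ a' = 1
    · rw [hone.1, hone.2, F2_mul_transpose_one_one, zero_mul]
    · have hlow : 2 ^ n ≤ b.val + b'.val := by
        fin_cases a <;> fin_cases a' <;> simp_all <;> omega
      rw [ih b b' hlow, mul_zero]

lemma card_subtype_le_val_add_one (N a : ℕ) :
    Fintype.card {k : Fin N // a ≤ k.val + 1} = N - (a - 1) := by
  have hval : ((univ : Finset (Fin N)).filter (fun k => a ≤ k.val + 1)).map Fin.valEmbedding =
      Ico (a - 1) N := by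
    ext m
    simp only [mem_map, mem_filter, mem_univ, true_and, Fin.valEmbedding_apply, mem_Ico]
    constructor
    · rintro ⟨k, hk, rfl⟩
      omega
    · intro hm
      exact ⟨⟨m, hm.2⟩, by simp only; omega, rfl⟩
  rw [Fintype.card_subtype, ← card_map, hval, Nat.card_Ico]

lemma finrank_rowSpan (n a : ℕ) : finrank (ZMod 2) (rowSpan n a) = 2 ^ n - (a - 1) := by
  have hrows : LinearIndependent (ZMod 2) (FN n).row :=
    linearIndependent_rows_of_isUnit ((isUnit_iff_isUnit_det _).mpr (by simp [det_FN]))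
  have hspan : {r | ∃ k : Fin (2 ^ n), a ≤ k.val + 1 ∧ r = FN n k} =
      Set.range ((FN n).row ∘ Subtype.val (p := fun k : Fin (2 ^ n) => a ≤ k.val + 1)) := by
    ext r
    constructor
    · rintro ⟨k, hk, rfl⟩
      exact ⟨⟨k, hk⟩, rfl⟩
    · rintro ⟨k, rfl⟩
      exact ⟨k, k.2, rfl⟩
  rw [rowSpan, hspan, finrank_span_eq_card (hrows.comp _ Subtype.val_injective),
    card_subtype_le_val_add_one]

abbrev dotForm (n : ℕ) : LinearMap.BilinForm (ZMod 2) (Fin (2 ^ n) → ZMod 2) := toBilin' 1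

lemma dotForm_apply (n : ℕ) (v w : Fin (2 ^ n) → ZMod 2) : dotForm n v w = v ⬝ᵥ w := by
  rw [toBilin'_apply', one_mulVec]

lemma dotForm_nondegenerate (n : ℕ) : (dotForm n).Nondegenerate :=
  LinearMap.BilinForm.nondegenerate_toBilin'_of_det_ne_zero' _ (by simp)

lemma dualCode_eq_orthogonal (n : ℕ) (W : Submodule (ZMod 2) (Fin (2 ^ n) → ZMod 2)) :
    dualCode n W = (dotForm n).orthogonal W := by
  ext v
  simp only [dualCode, Set.mem_ofPred_eq, SetLike.mem_coe, LinearMap.BilinForm.mem_orthogonal_iff,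
    dotForm_apply, dotProduct_comm _ v]
  rfl

lemma rowSpan_le_orthogonal {n a b : ℕ} (hab : 2 ^ n + 2 ≤ a + b) :
    rowSpan n a ≤ (dotForm n).orthogonal (rowSpan n b) := by
  rw [rowSpan, Submodule.span_le]
  rintro _ ⟨k, hk, rfl⟩
  have hker : rowSpan n b ≤ LinearMap.ker ((dotForm n).flip (FN n k)) := by
    rw [rowSpan, Submodule.span_le]
    rintro _ ⟨l, hl, rfl⟩
    show dotForm n (FN n l) (FN n k) = 0
    rw [dotForm_apply, ← FN_mul_transpose_apply_eq_zero n l k (by omega), mul_apply']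
    rfl
  exact fun y hy => hker hy

lemma rowSpan_eq_dualCode {n a b : ℕ} (hab : a + b = 2 ^ n + 2) :
    (rowSpan n a : Set (Fin (2 ^ n) → ZMod 2)) = dualCode n (rowSpan n b) := by
  rw [dualCode_eq_orthogonal, SetLike.coe_set_eq]
  refine Submodule.eq_of_le_of_finrank_eq (rowSpan_le_orthogonal hab.ge) ?_
  rw [LinearMap.BilinForm.finrank_orthogonal (dotForm_nondegenerate n), finrank_rowSpan,
    finrank_rowSpan, finrank_fin_fun]
  omega

theorem rowSpan_dual_general (n : ℕ) (i : ℕ)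
    (hi2 : i ≤ 2 ^ n) :
    (rowSpan n (2 ^ n + 2 - i) : Set (Fin (2 ^ n) → ZMod 2)) =
        dualCode n (rowSpan n i : Set (Fin (2 ^ n) → ZMod 2)) ∧
    (rowSpan n i : Set (Fin (2 ^ n) → ZMod 2)) =
        dualCode n (rowSpan n (2 ^ n + 2 - i) : Set (Fin (2 ^ n) → ZMod 2)) :=
  ⟨rowSpan_eq_dualCode (by omega), rowSpan_eq_dualCode (by omega)⟩

/-- Duality of subcodes: for N/2 + 1 ≤ i ≤ N (1-indexed), the code generated by rows
    i..N of F_N and the code generated by rows N+2-i..N are dual codes of each other. -/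
theorem rowSpan_dual (n : ℕ) (hn : 1 ≤ n) (i : ℕ)
    (hi1 : 2 ^ (n - 1) + 1 ≤ i) (hi2 : i ≤ 2 ^ n) :
    (rowSpan n (2 ^ n + 2 - i) : Set (Fin (2 ^ n) → ZMod 2)) =
        dualCode n (rowSpan n i : Set (Fin (2 ^ n) → ZMod 2)) ∧
    (rowSpan n i : Set (Fin (2 ^ n) → ZMod 2)) =
        dualCode n (rowSpan n (2 ^ n + 2 - i) : Set (Fin (2 ^ n) → ZMod 2)) :=
  rowSpan_dual_general n i hi2
end
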